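/- arXiv:1201.0314 — 4 statements merged into one kernel-verified Lean document; each statement's English description precedes it below -/
import Mathlib

section
/- For every integer k ≥ 1 and real n, the first-order operator (r/(n+2(k-1)) ∂_r + 1) intertwines the Bessel-type operators B_{r,k} = ∂_r² + (n-1+2k)/r ∂_r and B_{r,k-1} = ∂_r² + (n-1+2(k-1))/r ∂_r: for every smooth function g on (0,∞), ((r/(n+2(k-1)))∂_r + 1)(B_{r,k} g) = B_{r,k-1}(((r/(n+2(k-1)))∂_r + 1) g). -/
/-- The first-order operator `(r/(n+2i)) ∂_r + 1`. -/
noncomputable def Lop (n : ℝ) (i : ℕ) (g : ℝ → ℝ) : ℝ → ℝ :=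
  fun r => (r / (n + 2 * i)) * deriv g r + g r

/-- The Bessel-type operator `B_{r,m} = ∂_r² + ((n-1+2m)/r) ∂_r`. -/
noncomputable def Bop (n : ℝ) (m : ℕ) (g : ℝ → ℝ) : ℝ → ℝ :=
  fun r => deriv (deriv g) r + ((n - 1 + 2 * m) / r) * deriv g r

/-- One-step intertwining: `((r/(n+2(k-1)))∂_r + 1) ∘ B_{r,k} = B_{r,k-1} ∘ ((r/(n+2(k-1)))∂_r + 1)`
on smooth functions on `(0,∞)`. -/
theorem one_step_intertwining (n : ℝ) (k : ℕ) (hk : 1 ≤ k)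
    (hn : n + 2 * ((k : ℝ) - 1) ≠ 0)
    (g : ℝ → ℝ) (hg : ContDiffOn ℝ (⊤ : ℕ∞) g (Set.Ioi 0)) :
    ∀ r ∈ Set.Ioi (0 : ℝ),
      Lop n (k - 1) (Bop n k g) r = Bop n (k - 1) (Lop n (k - 1) g) r := by
  intro r hr
  have hro : (0:ℝ) < r := hr
  have hrne : r ≠ 0 := ne_of_gt hro
  have hk1 : ((k - 1 : ℕ) : ℝ) = (k:ℝ) - 1 := by
    push_cast [Nat.cast_sub hk]; ring
  set c : ℝ := n + 2 * ((k - 1 : ℕ) : ℝ) with hcdef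
  have hcne : c ≠ 0 := by rw [hcdef, hk1]; exact hn
  have hs : IsOpen (Set.Ioi (0:ℝ)) := isOpen_Ioi
  have hg1 : ContDiffOn ℝ (⊤ : ℕ∞) (deriv g) (Set.Ioi 0) := hg.deriv_of_isOpen hs (by simp)
  have hg2 : ContDiffOn ℝ (⊤ : ℕ∞) (deriv (deriv g)) (Set.Ioi 0) := hg1.deriv_of_isOpen hs (by simp)
  have hd : ∀ x ∈ Set.Ioi (0:ℝ), DifferentiableAt ℝ g x := fun x hx =>
    (hg.differentiableOn (by simp)).differentiableAt (hs.mem_nhds hx)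
  have hd1 : ∀ x ∈ Set.Ioi (0:ℝ), DifferentiableAt ℝ (deriv g) x := fun x hx =>
    (hg1.differentiableOn (by simp)).differentiableAt (hs.mem_nhds hx)
  have hd2 : ∀ x ∈ Set.Ioi (0:ℝ), DifferentiableAt ℝ (deriv (deriv g)) x := fun x hx =>
    (hg2.differentiableOn (by simp)).differentiableAt (hs.mem_nhds hx)
  -- derivative of Lop
  have HL : ∀ x ∈ Set.Ioi (0:ℝ), HasDerivAt (Lop n (k-1) g)
      (1 / c * deriv g x + x / c * deriv (deriv g) x + deriv g x) x := by
    intro x hx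
    have h1 : HasDerivAt (fun y : ℝ => y / c) (1 / c) x := by
      simpa using (hasDerivAt_id x).div_const c
    exact (h1.mul ((hd1 x hx).hasDerivAt)).add ((hd x hx).hasDerivAt)
  have dL : Set.EqOn (deriv (Lop n (k-1) g))
      (fun x => 1 / c * deriv g x + x / c * deriv (deriv g) x + deriv g x)
      (Set.Ioi 0) := fun x hx => (HL x hx).deriv
  -- second derivative of Lop at r
  have dL2 : deriv (deriv (Lop n (k-1) g)) r
      = 1 / c * deriv (deriv g) r
        + (1 / c * deriv (deriv g) r + r / c * deriv (deriv (deriv g)) r)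
        + deriv (deriv g) r := by
    have heq : deriv (Lop n (k-1) g) =ᶠ[nhds r]
        (fun x => 1 / c * deriv g x + x / c * deriv (deriv g) x + deriv g x) :=
      Filter.eventuallyEq_of_mem (hs.mem_nhds hr) dL
    rw [heq.deriv_eq]
    have h1 : HasDerivAt (fun y : ℝ => y / c) (1 / c) r := by
      simpa using (hasDerivAt_id r).div_const c
    have H : HasDerivAt
        (fun x => 1 / c * deriv g x + x / c * deriv (deriv g) x + deriv g x)
        (1 / c * deriv (deriv g) r
          + (1 / c * deriv (deriv g) r + r / c * deriv (deriv (deriv g)) r)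
          + deriv (deriv g) r) r := by
      exact ((((hd1 r hr).hasDerivAt.const_mul (1/c)).add
        (h1.mul ((hd2 r hr).hasDerivAt))).add ((hd1 r hr).hasDerivAt))
    exact H.deriv
  -- derivative of Bop n k g at r
  have HB : HasDerivAt (Bop n k g)
      (deriv (deriv (deriv g)) r
        + (((0 * r - (n - 1 + 2 * (k:ℝ)) * 1) / r ^ 2) * deriv g r
          + ((n - 1 + 2 * (k:ℝ)) / r) * deriv (deriv g) r)) r := by
    have ha : HasDerivAt (fun y : ℝ => (n - 1 + 2 * (k:ℝ)) / y)
        ((0 * r - (n - 1 + 2 * (k:ℝ)) * 1) / r ^ 2) r :=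
      (hasDerivAt_const r _).div (hasDerivAt_id r) hrne
    have := ((hd2 r hr).hasDerivAt).add (ha.mul ((hd1 r hr).hasDerivAt))
    exact this
  have dB : deriv (Bop n k g) r
      = deriv (deriv (deriv g)) r
        + (((0 * r - (n - 1 + 2 * (k:ℝ)) * 1) / r ^ 2) * deriv g r
          + ((n - 1 + 2 * (k:ℝ)) / r) * deriv (deriv g) r) := HB.deriv
  -- put everything together
  have hLr : deriv (Lop n (k - 1) g) r
      = 1 / c * deriv g r + r / c * deriv (deriv g) r + deriv g r := dL hr
  have e1 : Lop n (k - 1) (Bop n k g) r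
      = r / c * deriv (Bop n k g) r
        + (deriv (deriv g) r + ((n - 1 + 2 * (k:ℝ)) / r) * deriv g r) := rfl
  have e2 : Bop n (k - 1) (Lop n (k - 1) g) r
      = deriv (deriv (Lop n (k - 1) g)) r
        + ((n - 1 + 2 * ((k - 1 : ℕ) : ℝ)) / r) * deriv (Lop n (k - 1) g) r := rfl
  rw [e1, e2, dB, dL2, hLr, hcdef, hk1]
  field_simp
  ring
end

section
/- For every integer m ≥ 0, the m-th order differential operator Q_m = ((r/n)∂_r + 1)((r/(n+2))∂_r + 1)···((r/(n+2(m-1)))∂_r + 1) satisfies the intertwining identity Q_m ∘ B_{r,m} = B_{r,0} ∘ Q_m on smooth functions of r > 0, where B_{r,m} = ∂_r² + ((n-1+2m)/r)∂_r. -/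
/-- `Q_m = ((r/n)∂_r+1)((r/(n+2))∂_r+1)⋯((r/(n+2(m-1)))∂_r+1)`, rightmost factor acting first. -/
noncomputable def Qop (n : ℝ) : ℕ → (ℝ → ℝ) → ℝ → ℝ
  | 0, g => g
  | m + 1, g => Qop n m (Lop n m g)

open Set

lemma deriv_smoothQ {f : ℝ → ℝ} (hf : ContDiffOn ℝ (⊤ : ℕ∞) f (Ioi 0)) :
    ContDiffOn ℝ (⊤ : ℕ∞) (deriv f) (Ioi 0) :=
  hf.deriv_of_isOpen isOpen_Ioi (by simp)

lemma eqOn_derivQ {f g : ℝ → ℝ} (h : Set.EqOn f g (Ioi 0)) :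
    Set.EqOn (deriv f) (deriv g) (Ioi 0) := fun r hr =>
  Filter.EventuallyEq.deriv_eq (h.eventuallyEq_of_mem (isOpen_Ioi.mem_nhds hr))

lemma Lop_smooth (n : ℝ) (i : ℕ) {g : ℝ → ℝ} (hg : ContDiffOn ℝ (⊤ : ℕ∞) g (Ioi 0)) :
    ContDiffOn ℝ (⊤ : ℕ∞) (Lop n i g) (Ioi 0) := by
  unfold Lop
  exact ((contDiffOn_id.div_const _).mul (deriv_smoothQ hg)).add hg

lemma Bop_smooth (n : ℝ) (m : ℕ) {g : ℝ → ℝ} (hg : ContDiffOn ℝ (⊤ : ℕ∞) g (Ioi 0)) :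
    ContDiffOn ℝ (⊤ : ℕ∞) (Bop n m g) (Ioi 0) := by
  unfold Bop
  exact (deriv_smoothQ (deriv_smoothQ hg)).add
    (((contDiffOn_const.div contDiffOn_id fun r hr => ne_of_gt hr)).mul (deriv_smoothQ hg))

lemma Lop_congr (n : ℝ) (i : ℕ) {f g : ℝ → ℝ} (h : Set.EqOn f g (Ioi 0)) :
    Set.EqOn (Lop n i f) (Lop n i g) (Ioi 0) := fun r hr => by
  unfold Lop
  rw [eqOn_derivQ h hr, h hr]

lemma Qop_congr (n : ℝ) (m : ℕ) {f g : ℝ → ℝ} (h : Set.EqOn f g (Ioi 0)) :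
    Set.EqOn (Qop n m f) (Qop n m g) (Ioi 0) := by
  induction m generalizing f g with
  | zero => exact h
  | succ m ih => exact ih (Lop_congr n m h)

/-- Key intertwining step: `L_m ∘ B_{r,m+1} = B_{r,m} ∘ L_m` on `(0,∞)`. -/
lemma key_step (n : ℝ) (m : ℕ) (hc : n + 2 * (m : ℝ) ≠ 0) {g : ℝ → ℝ}
    (hg : ContDiffOn ℝ (⊤ : ℕ∞) g (Ioi 0)) :
    Set.EqOn (Lop n m (Bop n (m + 1) g)) (Bop n m (Lop n m g)) (Ioi 0) := by
  set c : ℝ := n + 2 * (m : ℝ) with hcdef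
  set f1 := deriv g with hf1
  set f2 := deriv f1 with hf2
  set f3 := deriv f2 with hf3
  have hg1 : ContDiffOn ℝ (⊤ : ℕ∞) f1 (Ioi 0) := deriv_smoothQ hg
  have hg2 : ContDiffOn ℝ (⊤ : ℕ∞) f2 (Ioi 0) := deriv_smoothQ hg1
  have hg3 : ContDiffOn ℝ (⊤ : ℕ∞) f3 (Ioi 0) := deriv_smoothQ hg2
  have hd1 : ∀ x ∈ Ioi (0 : ℝ), HasDerivAt g (f1 x) x := fun x hx =>
    ((hg.differentiableOn (by simp)).differentiableAt (isOpen_Ioi.mem_nhds hx)).hasDerivAt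
  have hd2 : ∀ x ∈ Ioi (0 : ℝ), HasDerivAt f1 (f2 x) x := fun x hx =>
    ((hg1.differentiableOn (by simp)).differentiableAt (isOpen_Ioi.mem_nhds hx)).hasDerivAt
  have hd3 : ∀ x ∈ Ioi (0 : ℝ), HasDerivAt f2 (f3 x) x := fun x hx =>
    ((hg2.differentiableOn (by simp)).differentiableAt (isOpen_Ioi.mem_nhds hx)).hasDerivAt
  -- first derivative of Lop n m g on Ioi 0
  have hLd : ∀ x ∈ Ioi (0 : ℝ),
      HasDerivAt (Lop n m g) (1 / c * f1 x + x / c * f2 x + f1 x) x := by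
    intro x hx
    have h1 : HasDerivAt (fun y : ℝ => y / c) (1 / c) x := by
      simpa using (hasDerivAt_id x).div_const c
    exact ((h1.mul (hd2 x hx)).add (hd1 x hx))
  have hLderiv : Set.EqOn (deriv (Lop n m g))
      (fun x => 1 / c * f1 x + x / c * f2 x + f1 x) (Ioi 0) := fun x hx =>
    (hLd x hx).deriv
  intro r hr
  have hr0 : r ≠ 0 := ne_of_gt hr
  -- second derivative of Lop n m g at r
  have hL2 : deriv (deriv (Lop n m g)) r
      = 1 / c * f2 r + (1 / c * f2 r + r / c * f3 r) + f2 r := by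
    have heq : deriv (Lop n m g) =ᶠ[nhds r]
        (fun x => 1 / c * f1 x + x / c * f2 x + f1 x) :=
      hLderiv.eventuallyEq_of_mem (isOpen_Ioi.mem_nhds hr)
    rw [heq.deriv_eq]
    have h1 : HasDerivAt (fun y : ℝ => y / c) (1 / c) r := by
      simpa using (hasDerivAt_id r).div_const c
    exact ((((hd2 r hr).const_mul (1 / c)).add (h1.mul (hd3 r hr))).add (hd2 r hr)).deriv
  -- derivative of Bop n (m+1) g at r
  have hBd : deriv (Bop n (m + 1) g) r
      = f3 r + ((0 * r - (n - 1 + 2 * ((m : ℝ) + 1)) * 1) / r ^ 2 * f1 r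
        + (n - 1 + 2 * ((m : ℝ) + 1)) / r * f2 r) := by
    have hB : Bop n (m + 1) g = fun x => f2 x + (n - 1 + 2 * ((m : ℝ) + 1)) / x * f1 x := by
      funext x
      simp only [Bop, ← hf1, ← hf2]
      push_cast
      ring
    rw [hB]
    have h1 : HasDerivAt (fun y : ℝ => (n - 1 + 2 * ((m : ℝ) + 1)) / y)
        ((0 * r - (n - 1 + 2 * ((m : ℝ) + 1)) * 1) / r ^ 2) r :=
      (hasDerivAt_const r _).div (hasDerivAt_id r) hr0
    exact ((hd3 r hr).add (h1.mul (hd2 r hr))).deriv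
  -- assemble both sides
  show (r / (n + 2 * (m : ℝ))) * deriv (Bop n (m + 1) g) r + Bop n (m + 1) g r = _
  have hBval : Bop n (m + 1) g r = f2 r + (n - 1 + 2 * ((m : ℝ) + 1)) / r * f1 r := by
    simp only [Bop, ← hf1, ← hf2]
    push_cast
    ring
  have hRHS : Bop n m (Lop n m g) r
      = (1 / c * f2 r + (1 / c * f2 r + r / c * f3 r) + f2 r)
        + (n - 1 + 2 * (m : ℝ)) / r * (1 / c * f1 r + r / c * f2 r + f1 r) := by
    simp only [Bop, hL2, hLderiv hr]
  rw [hBd, hBval, hRHS, ← hcdef]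
  have hc' : c ≠ 0 := hc
  field_simp
  ring

theorem Q_intertwining_aux (n : ℝ) (m : ℕ)
    (hni : ∀ i < m, n + 2 * (i : ℝ) ≠ 0) :
    ∀ g : ℝ → ℝ, ContDiffOn ℝ (⊤ : ℕ∞) g (Set.Ioi 0) →
      Set.EqOn (Qop n m (Bop n m g)) (Bop n 0 (Qop n m g)) (Set.Ioi 0) := by
  induction m with
  | zero => intro g _ r _; rfl
  | succ m ih =>
    intro g hg r hr
    have h1 : Set.EqOn (Qop n m (Lop n m (Bop n (m + 1) g)))
        (Qop n m (Bop n m (Lop n m g))) (Ioi 0) :=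
      Qop_congr n m (key_step n m (hni m (Nat.lt_succ_self m)) hg)
    have h2 := ih (fun i hi => hni i (hi.trans (Nat.lt_succ_self m)))
      (Lop n m g) (Lop_smooth n m hg)
    exact (h1 hr).trans (h2 hr)

/-- Intertwining identity `Q_m ∘ B_{r,m} = B_{r,0} ∘ Q_m` on smooth functions on `(0,∞)`. -/
theorem Q_intertwining (n : ℝ) (hn : 1 ≤ n) (m : ℕ)
    (hni : ∀ i < m, n + 2 * (i : ℝ) ≠ 0)
    (g : ℝ → ℝ) (hg : ContDiffOn ℝ (⊤ : ℕ∞) g (Set.Ioi 0)) :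
    ∀ r ∈ Set.Ioi (0 : ℝ),
      Qop n m (Bop n m g) r = Bop n 0 (Qop n m g) r := by
  exact fun r hr => Q_intertwining_aux n m hni g hg hr
end

section
/- Let g : [a,∞) → ℝ be continuous, m ≥ 1 an integer, n ≥ 1, and define k(r) = (n(n+2)···(n+2(m-1)) / (2^{m-1}(m-1)!)) · r^{-(n+2(m-1))} · ∫_a^r g(τ) τ^{n-1} (r² − τ²)^{m-1} dτ. Then Q_m k = g on (a,∞), where Q_m = ((r/n)∂_r + 1)···((r/(n+2(m-1)))∂_r + 1). -/
/-!
Put `J_i(r) = ∫_a^r g(τ) τ^{n-1} (r² - τ²)^i dτ`. Expanding `(r² - τ²)^i` binomially turns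
differentiation under the integral sign into the product rule and the fundamental theorem of
calculus, giving `J_0' = g r^{n-1}` and `J_{i+1}' = 2(i+1) r J_i`. Since
`((r/p) ∂_r + 1)(r^{-p} u) = r^{1-p} u' / p`, the factor with `p = n + 2i` sends the normalised
`r^{-(n+2i)} J_i` to the normalised `r^{-(n+2(i-1))} J_{i-1}`, and the factor with `p = n` sends
`r^{-n} J_0` to `g`.
-/

open Set Finset MeasureTheory intervalIntegral

theorem hasDerivAt_integral_of_continuousOn_Ici {f : ℝ → ℝ} {a x : ℝ}
    (hf : ContinuousOn f (Ici a)) (hx : a < x) :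
    HasDerivAt (fun y => ∫ τ in a..y, f τ) (f x) x :=
  integral_hasDerivAt_right
    ((hf.mono Icc_subset_Ici_self).intervalIntegrable_of_Icc hx.le)
    ⟨Ioi a, Ioi_mem_nhds hx, (hf.mono Ioi_subset_Ici_self).aestronglyMeasurable measurableSet_Ioi⟩
    (hf.continuousAt (Ici_mem_nhds hx))

theorem hasDerivAt_integral_of_eq_sum_mul {ι : Type*} {s : Finset ι} {c φ : ι → ℝ → ℝ}
    {c' : ι → ℝ} {F : ℝ → ℝ → ℝ} {F' : ℝ → ℝ} {a x : ℝ}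
    (hF : ∀ y τ, F y τ = ∑ j ∈ s, c j y * φ j τ) (hφ : ∀ j ∈ s, ContinuousOn (φ j) (Ici a))
    (hc : ∀ j ∈ s, HasDerivAt (c j) (c' j) x) (hF' : ∀ τ, HasDerivAt (F · τ) (F' τ) x)
    (hx : a < x) :
    HasDerivAt (fun y => ∫ τ in a..y, F y τ) ((∫ τ in a..x, F' τ) + F x x) x := by
  have hF'_eq : F' = fun τ => ∑ j ∈ s, c' j * φ j τ := by
    funext τ
    refine (hF' τ).unique ?_
    simp_rw [hF]
    exact HasDerivAt.fun_sum fun j hj => (hc j hj).mul_const _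
  have integral_eq (e : ι → ℝ) {y : ℝ} (hy : a ≤ y) :
      ∫ τ in a..y, ∑ j ∈ s, e j * φ j τ = ∑ j ∈ s, e j * ∫ τ in a..y, φ j τ := by
    rw [integral_finsetSum fun j hj =>
      (((hφ j hj).mono Icc_subset_Ici_self).intervalIntegrable_of_Icc hy).const_mul _]
    simp_rw [intervalIntegral.integral_const_mul]
  have hsum : HasDerivAt (fun y => ∑ j ∈ s, c j y * ∫ τ in a..y, φ j τ)
      (∑ j ∈ s, (c' j * (∫ τ in a..x, φ j τ) + c j x * φ j x)) x :=
    HasDerivAt.fun_sum fun j hj =>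
      (hc j hj).mul (hasDerivAt_integral_of_continuousOn_Ici (hφ j hj) hx)
  have hlocal : (fun y => ∫ τ in a..y, F y τ) =ᶠ[nhds x]
      fun y => ∑ j ∈ s, c j y * ∫ τ in a..y, φ j τ := by
    filter_upwards [Ioi_mem_nhds hx] with y hy
    simp_rw [hF]
    exact integral_eq (fun j => c j y) hy.le
  refine (hsum.congr_of_eventuallyEq hlocal).congr_deriv ?_
  rw [hF'_eq, hF, integral_eq c' hx.le, ← sum_add_distrib]

noncomputable def kernelIntegral (a : ℝ) (h : ℝ → ℝ) (i : ℕ) (r : ℝ) : ℝ :=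
  ∫ τ in a..r, h τ * (r ^ 2 - τ ^ 2) ^ i

section kernelIntegral

variable {a x : ℝ} {h : ℝ → ℝ}

theorem hasDerivAt_kernelIntegral (hh : ContinuousOn h (Ici a)) (hx : a < x) (i : ℕ) :
    HasDerivAt (kernelIntegral a h i)
      ((∫ τ in a..x, h τ * (i * (x ^ 2 - τ ^ 2) ^ (i - 1) * (2 * x))) + h x * 0 ^ i) x := by
  have binomial (y τ : ℝ) : h τ * (y ^ 2 - τ ^ 2) ^ i =
      ∑ j ∈ range (i + 1), (y ^ 2) ^ j * (h τ * ((-τ ^ 2) ^ (i - j) * i.choose j)) := by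
    rw [sub_eq_add_neg, add_pow, mul_sum]
    exact sum_congr rfl fun j _ => by ring
  have hφ (j : ℕ) : ContinuousOn (fun τ => h τ * ((-τ ^ 2) ^ (i - j) * i.choose j)) (Ici a) :=
    hh.mul (by fun_prop)
  refine (hasDerivAt_integral_of_eq_sum_mul (F := fun y τ => h τ * (y ^ 2 - τ ^ 2) ^ i) binomial
    (fun j _ => hφ j) (fun j _ => (hasDerivAt_pow 2 x).pow j)
    (fun τ => (((hasDerivAt_pow 2 x).sub_const (τ ^ 2)).pow i).const_mul (h τ)) hx).congr_deriv ?_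
  rw [sub_self]
  norm_num

theorem hasDerivAt_kernelIntegral_zero (hh : ContinuousOn h (Ici a)) (hx : a < x) :
    HasDerivAt (kernelIntegral a h 0) (h x) x :=
  (hasDerivAt_kernelIntegral hh hx 0).congr_deriv (by simp)

theorem hasDerivAt_kernelIntegral_succ (hh : ContinuousOn h (Ici a)) (hx : a < x) (i : ℕ) :
    HasDerivAt (kernelIntegral a h (i + 1)) (2 * (i + 1) * x * kernelIntegral a h i x) x := by
  refine (hasDerivAt_kernelIntegral hh hx (i + 1)).congr_deriv ?_
  rw [zero_pow i.succ_ne_zero, mul_zero, add_zero, kernelIntegral,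
    ← intervalIntegral.integral_const_mul]
  congr 1
  funext τ
  push_cast
  ring

end kernelIntegral

theorem Lop_const_mul_rpow_mul {n : ℝ} {i : ℕ} {u : ℝ → ℝ} {u' r : ℝ} (C : ℝ)
    (hp : n + 2 * i ≠ 0) (hr : 0 < r) (hu : HasDerivAt u u' r) :
    Lop n i (fun x => C * x ^ (-(n + 2 * i)) * u x) r
      = C * r ^ (1 - (n + 2 * i)) * u' / (n + 2 * i) := by
  have hderiv : HasDerivAt (fun x => C * x ^ (-(n + 2 * i)) * u x)
      (C * (-(n + 2 * i) * r ^ (-(n + 2 * i) - 1)) * u r + C * r ^ (-(n + 2 * i)) * u') r :=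
    ((Real.hasDerivAt_rpow_const (Or.inl hr.ne')).const_mul C).mul hu
  have h1 : r * r ^ (-(n + 2 * i) - 1) = r ^ (-(n + 2 * i)) := by
    rw [mul_comm, ← Real.rpow_add_one hr.ne']
    ring_nf
  have h2 : r * r ^ (-(n + 2 * i)) = r ^ (1 - (n + 2 * i)) := by
    rw [mul_comm, ← Real.rpow_add_one hr.ne']
    ring_nf
  rw [Lop, hderiv.deriv]
  field_simp
  linear_combination (-(C * u r * (n + 2 * i))) * h1 + C * u' * h2

theorem Qop_eqOn {n : ℝ} {U : Set ℝ} (hU : IsOpen U) :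
    ∀ (m : ℕ) {f f' : ℝ → ℝ}, EqOn f f' U → EqOn (Qop n m f) (Qop n m f') U
  | 0, _, _, h => h
  | m + 1, f, f', h => Qop_eqOn hU m fun r hr => by
      simp only [Lop, h hr, h.deriv hU hr]

noncomputable def particularSolution (n a : ℝ) (g : ℝ → ℝ) (s : ℕ) (r : ℝ) : ℝ :=
  (∏ i ∈ range (s + 1), (n + 2 * i)) / (2 ^ s * s.factorial) * r ^ (-(n + 2 * s))
    * kernelIntegral a (fun τ => g τ * τ ^ (n - 1)) s r

section particularSolution

variable {n a : ℝ} {g : ℝ → ℝ}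

theorem continuousOn_mul_rpow (ha : 0 < a) (hg : ContinuousOn g (Ici a)) :
    ContinuousOn (fun τ => g τ * τ ^ (n - 1)) (Ici a) :=
  hg.mul (continuousOn_id.rpow_const fun _ hτ => Or.inl (ha.trans_le hτ).ne')

theorem Lop_particularSolution_zero (hn : 0 < n) (ha : 0 < a) (hg : ContinuousOn g (Ici a))
    {r : ℝ} (hr : a < r) : Lop n 0 (particularSolution n a g 0) r = g r := by
  have hr0 : 0 < r := ha.trans hr
  unfold particularSolution
  rw [Lop_const_mul_rpow_mul _ (by simpa using hn.ne') hr0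
    (hasDerivAt_kernelIntegral_zero (continuousOn_mul_rpow ha hg) hr)]
  have hpow : r ^ (1 - n) * r ^ (n - 1) = 1 := by
    rw [← Real.rpow_add hr0]
    simp
  simp only [zero_add, prod_range_one, CharP.cast_eq_zero, mul_zero, add_zero, pow_zero,
    Nat.factorial_zero, Nat.cast_one, mul_one, div_one]
  field_simp
  linear_combination g r * hpow

theorem Lop_particularSolution_succ (hn : 0 < n) (ha : 0 < a) (hg : ContinuousOn g (Ici a))
    (s : ℕ) {r : ℝ} (hr : a < r) :
    Lop n (s + 1) (particularSolution n a g (s + 1)) r = particularSolution n a g s r := by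
  have hr0 : 0 < r := ha.trans hr
  unfold particularSolution
  rw [Lop_const_mul_rpow_mul _ (by positivity) hr0
    (hasDerivAt_kernelIntegral_succ (continuousOn_mul_rpow ha hg) hr s)]
  have hpow : r ^ (1 - (n + 2 * ↑(s + 1))) * r = r ^ (-(n + 2 * s)) := by
    rw [← Real.rpow_add_one hr0.ne']
    push_cast
    ring_nf
  have hp : n + 2 * ((s + 1 : ℕ) : ℝ) ≠ 0 := by positivity
  rw [prod_range_succ, Nat.factorial_succ, ← hpow]
  field_simp
  push_cast
  ring

theorem Qop_particularSolution (hn : 0 < n) (ha : 0 < a) (hg : ContinuousOn g (Ici a)) :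
    ∀ s : ℕ, EqOn (Qop n (s + 1) (particularSolution n a g s)) g (Ioi a)
  | 0 => fun _ hr => Lop_particularSolution_zero hn ha hg hr
  | s + 1 => (Qop_eqOn isOpen_Ioi (s + 1)
      fun _ hr => Lop_particularSolution_succ hn ha hg s hr).trans
        (Qop_particularSolution hn ha hg s)

end particularSolution

/-- The particular solution
`k(r) = (n(n+2)⋯(n+2(m-1)) / (2^{m-1}(m-1)!)) r^{-(n+2(m-1))} ∫_a^r g(τ) τ^{n-1}(r²-τ²)^{m-1} dτ`
satisfies `Q_m k = g` on `(a,∞)`. -/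
theorem Qm_particular_solution (n : ℝ) (hn : 0 < n) (m : ℕ) (hm : 1 ≤ m)
    (a : ℝ) (ha : 0 < a) (g : ℝ → ℝ) (hg : ContinuousOn g (Set.Ici a))
    (k : ℝ → ℝ)
    (hk : ∀ r, k r =
      ((∏ i ∈ Finset.range m, (n + 2 * i)) / (2 ^ (m - 1) * (Nat.factorial (m - 1) : ℝ)))
        * r ^ (-(n + 2 * ((m : ℝ) - 1)))
        * ∫ τ in a..r, g τ * τ ^ (n - 1) * (r ^ 2 - τ ^ 2) ^ (m - 1)) :
    ∀ r, a < r → Qop n m k r = g r := by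
  obtain ⟨s, rfl⟩ : ∃ s, m = s + 1 := ⟨m - 1, by omega⟩
  have hk_eq : k = particularSolution n a g s := by
    funext r
    simp only [hk r, particularSolution, kernelIntegral, Nat.add_sub_cancel, Nat.cast_add,
      Nat.cast_one, add_sub_cancel_right, mul_assoc]
  subst hk_eq
  exact fun r hr => Qop_particularSolution hn ha hg s hr
end

section
/- With k(r) = (n(n+2)···(n+2(m-1)) / (2^{m-1}(m-1)!)) · r^{-(n+2(m-1))} · ∫_a^r g(τ) τ^{n-1}(r²−τ²)^{m-1} dτ for m ≥ 2, one has ((r/(n+2(m-1)))∂_r + 1) k(r) = (n(n+2)···(n+2(m-2)) / (2^{m-2}(m-2)!)) · r^{-(n+2(m-2))} · ∫_a^r g(τ) τ^{n-1}(r²−τ²)^{m-2} dτ. -/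
/-!
Write `k(r) = c_{m-1} r^(-p) F(r)` with `p = n + 2(m-1)` and
`F(r) = ∫_a^r g(τ) τ^(n-1) (r²-τ²)^(m-1) dτ`.
Since `(r² - τ²)^(m-1)` is a polynomial in `r`, the binomial theorem splits the integrand into
finitely many products `u(r) v(τ)`, for which Leibniz's rule is just the product rule together with
the fundamental theorem of calculus. The boundary term carries the factor `(r² - r²)^(m-1) = 0`, so
`F'(r) = 2(m-1) r ∫_a^r g(τ) τ^(n-1) (r²-τ²)^(m-2) dτ`. The Euler-type operator kills the power:
`((r/p)∂_r + 1)(r^(-p) F) = r^(1-p) F' / p`, and the constants match because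
`c_{m-1} · 2(m-1) = c_{m-2} · (n + 2(m-1))` for `c_j = n(n+2)⋯(n+2j) / (2^j j!)`.
-/

open intervalIntegral MeasureTheory Set Finset

theorem ContinuousOn.integral_hasDerivAt_right_of_lt {v : ℝ → ℝ} {a r : ℝ}
    (hv : ContinuousOn v (Ici a)) (har : a < r) :
    HasDerivAt (fun s => ∫ τ in a..s, v τ) (v r) r :=
  integral_hasDerivAt_right
    ((hv.mono (uIcc_of_le har.le ▸ Icc_subset_Ici_self)).intervalIntegrable)
    ((hv.mono (Ioi_subset_Ici le_rfl)).stronglyMeasurableAtFilter isOpen_Ioi r har)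
    ((hv r har.le).continuousAt (Ici_mem_nhds har))

theorem hasDerivAt_integral_of_eq_sum_mul_s5 {ι : Type*} (S : Finset ι) {u v : ι → ℝ → ℝ}
    {f : ℝ → ℝ → ℝ} {f' : ℝ → ℝ} {a r : ℝ} (har : a < r)
    (hf : ∀ s τ, f s τ = ∑ i ∈ S, u i s * v i τ)
    (hu : ∀ i ∈ S, DifferentiableAt ℝ (u i) r) (hv : ∀ i ∈ S, ContinuousOn (v i) (Ici a))
    (hf' : ∀ τ, HasDerivAt (f · τ) (f' τ) r) :
    HasDerivAt (fun s => ∫ τ in a..s, f s τ) (f r r + ∫ τ in a..r, f' τ) r := by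
  have hint : ∀ i ∈ S, ∀ s, a ≤ s → IntervalIntegrable (v i) volume a s := fun i hi s hs =>
    ((hv i hi).mono (uIcc_of_le hs ▸ Icc_subset_Ici_self)).intervalIntegrable
  have hf'_eq : f' = fun τ => ∑ i ∈ S, deriv (u i) r * v i τ := funext fun τ =>
    (hf' τ).unique <| by
      simp only [hf]
      exact HasDerivAt.fun_sum fun i hi => (hu i hi).hasDerivAt.mul_const _
  have hsum : HasDerivAt (fun s => ∑ i ∈ S, u i s * ∫ τ in a..s, v i τ)
      (∑ i ∈ S, (deriv (u i) r * (∫ τ in a..r, v i τ) + u i r * v i r)) r :=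
    HasDerivAt.fun_sum fun i hi =>
      (hu i hi).hasDerivAt.mul ((hv i hi).integral_hasDerivAt_right_of_lt har)
  refine (hsum.congr_of_eventuallyEq ?_).congr_deriv ?_
  · filter_upwards [Ioi_mem_nhds har] with s hs
    simp only [hf]
    rw [integral_finsetSum fun i hi => (hint i hi s hs.le).const_mul _]
    exact Finset.sum_congr rfl fun i _ => intervalIntegral.integral_const_mul _ _
  · rw [hf'_eq, hf, integral_finsetSum fun i hi => (hint i hi r har.le).const_mul _,
      sum_add_distrib, add_comm]
    simp only [intervalIntegral.integral_const_mul]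

theorem hasDerivAt_integral_mul_sq_sub_sq_pow {h : ℝ → ℝ} {a r : ℝ} (hh : ContinuousOn h (Ici a))
    (har : a < r) {l : ℕ} (hl : l ≠ 0) :
    HasDerivAt (fun s => ∫ τ in a..s, h τ * (s ^ 2 - τ ^ 2) ^ l)
      (2 * l * r * ∫ τ in a..r, h τ * (r ^ 2 - τ ^ 2) ^ (l - 1)) r := by
  have hsep : ∀ s τ, h τ * (s ^ 2 - τ ^ 2) ^ l =
      ∑ i ∈ range (l + 1), (s ^ 2) ^ i * (h τ * ((-τ ^ 2) ^ (l - i) * l.choose i)) := by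
    intro s τ
    rw [sub_eq_add_neg, add_pow, mul_sum]
    exact sum_congr rfl fun i _ => by ring
  have hderiv : ∀ τ, HasDerivAt (fun s => h τ * (s ^ 2 - τ ^ 2) ^ l)
      (h τ * (l * (r ^ 2 - τ ^ 2) ^ (l - 1) * (2 * r))) r := by
    intro τ
    simpa using (((hasDerivAt_pow 2 r).sub_const (τ ^ 2)).pow l).const_mul (h τ)
  convert hasDerivAt_integral_of_eq_sum_mul_s5 (range (l + 1)) har hsep (fun i _ => by fun_prop)
    (fun i _ => hh.mul (by fun_prop)) hderiv using 1
  rw [sub_self, zero_pow hl, mul_zero, zero_add, ← intervalIntegral.integral_const_mul]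
  exact integral_congr fun τ _ => by ring

theorem euler_operator_rpow_neg_mul {F : ℝ → ℝ} {F' c p r : ℝ} (hr : 0 < r) (hp : p ≠ 0)
    (hF : HasDerivAt F F' r) :
    r / p * deriv (fun s => c * s ^ (-p) * F s) r + c * r ^ (-p) * F r =
      c * r ^ (1 - p) * F' / p := by
  have hpow : HasDerivAt (fun s : ℝ => s ^ (-p)) (-p * r ^ (-p - 1)) r :=
    Real.hasDerivAt_rpow_const (Or.inl hr.ne')
  rw [((hpow.const_mul c).fun_mul hF).deriv, Real.rpow_sub_one hr.ne', sub_eq_add_neg,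
    Real.rpow_add hr, Real.rpow_one]
  field_simp
  ring

noncomputable def kCoeff (n : ℝ) (j : ℕ) : ℝ :=
  (∏ i ∈ range (j + 1), (n + 2 * i)) / (2 ^ j * j.factorial)

theorem kCoeff_succ_mul (n : ℝ) (j : ℕ) :
    kCoeff n (j + 1) * (2 * (j + 1)) = kCoeff n j * (n + 2 * (j + 1)) := by
  rw [kCoeff, kCoeff, prod_range_succ _ (j + 1), Nat.factorial_succ]
  push_cast
  field_simp
  ring

/-- One-step recursion for the particular solution: applying `((r/(n+2(m-1)))∂_r + 1)` to
`k(r) = (n(n+2)⋯(n+2(m-1))/(2^{m-1}(m-1)!)) r^{-(n+2(m-1))} ∫_a^r g(τ)τ^{n-1}(r²-τ²)^{m-1} dτ`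
yields the analogous expression with `m` replaced by `m-1`. -/
theorem k_recursion (n : ℝ) (hn : 0 < n) (m : ℕ) (hm : 2 ≤ m)
    (a : ℝ) (ha : 0 < a) (g : ℝ → ℝ) (hg : ContinuousOn g (Set.Ici a))
    (k : ℝ → ℝ)
    (hk : ∀ r, k r =
      ((∏ i ∈ Finset.range m, (n + 2 * i)) / (2 ^ (m - 1) * (Nat.factorial (m - 1) : ℝ)))
        * r ^ (-(n + 2 * ((m : ℝ) - 1)))
        * ∫ τ in a..r, g τ * τ ^ (n - 1) * (r ^ 2 - τ ^ 2) ^ (m - 1)) :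
    ∀ r, a < r →
      (r / (n + 2 * ((m : ℝ) - 1))) * deriv k r + k r =
        ((∏ i ∈ Finset.range (m - 1), (n + 2 * i)) / (2 ^ (m - 2) * (Nat.factorial (m - 2) : ℝ)))
          * r ^ (-(n + 2 * ((m : ℝ) - 2)))
          * ∫ τ in a..r, g τ * τ ^ (n - 1) * (r ^ 2 - τ ^ 2) ^ (m - 2) := by
  intro r hr
  obtain ⟨j, rfl⟩ : ∃ j, m = j + 2 := ⟨m - 2, by omega⟩
  have hweight : ContinuousOn (fun τ => g τ * τ ^ (n - 1)) (Ici a) :=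
    hg.mul (continuousOn_id.rpow_const fun τ hτ => Or.inl (ha.trans_le hτ).ne')
  have hF := hasDerivAt_integral_mul_sq_sub_sq_pow hweight hr (l := j + 1) (by omega)
  simp only [Nat.add_sub_cancel, Nat.cast_add, Nat.cast_ofNat, add_sub_cancel_right,
    show j + 2 - 1 = j + 1 by omega, show (j : ℝ) + 2 - 1 = j + 1 by ring] at hk hF ⊢
  have hp : n + 2 * (j + 1) ≠ 0 := by positivity
  have hk' : k = fun s => kCoeff n (j + 1) * s ^ (-(n + 2 * (j + 1))) *
      ∫ τ in a..s, g τ * τ ^ (n - 1) * (s ^ 2 - τ ^ 2) ^ (j + 1) := funext hk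
  rw [hk', euler_operator_rpow_neg_mul (ha.trans hr) hp hF]
  have hexp : r ^ (-(n + 2 * j)) = r ^ (1 - (n + 2 * (j + 1))) * r := by
    rw [← Real.rpow_add_one (ha.trans hr).ne']
    ring_nf
  rw [show (∏ i ∈ range (j + 1), (n + 2 * i)) / (2 ^ j * (j.factorial : ℝ)) = kCoeff n j from rfl,
    hexp, Nat.cast_one, div_eq_iff hp]
  linear_combination (r ^ (1 - (n + 2 * (j + 1))) * r *
    ∫ τ in a..r, g τ * τ ^ (n - 1) * (r ^ 2 - τ ^ 2) ^ j) * kCoeff_succ_mul n j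
end
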